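/- The map ψ is continuous on all of ℂ^p × ℂ^q, and its restriction to the open set {(z,w) : z ≠ 0 and w ≠ 0} is smooth (C^∞). Moreover ψ is equivariant for the weighted circle action: ψ(λ·(z,w)) = λ·ψ(z,w) for all λ in the unit circle and all (z,w). -/

import Mathlib

/-- The weighted square norm `|z|²_c = ∑ c_j |z_j|²` on `ℂ^n`. -/
noncomputable def wnorm {n : ℕ} (c : Fin n → ℕ) (z : Fin n → ℂ) : ℝ :=
  ∑ j, (c j : ℝ) * ‖z j‖ ^ 2

/-- The weighted circle action: `λ·(z,w) = ((λ^{a_j} z_j)_j, (λ^{-b_j} w_j)_j)`. -/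
noncomputable def act {p q : ℕ} (a : Fin p → ℕ) (b : Fin q → ℕ) (l : ℂ)
    (x : (Fin p → ℂ) × (Fin q → ℂ)) : (Fin p → ℂ) × (Fin q → ℂ) :=
  (fun j => l ^ (a j : ℤ) * x.1 j, fun j => l ^ (-(b j : ℤ)) * x.2 j)

open Classical in
/-- The blow-down map
`ψ(z,w) = ((|w|²_b/|z|²_a)^{1/4}·z, (|z|²_a/|w|²_b)^{1/4}·w)` for `z ≠ 0` and
`w ≠ 0`, and `ψ(z,w) = (0,0)` if `z = 0` or `w = 0`. -/
noncomputable def psi {p q : ℕ} (a : Fin p → ℕ) (b : Fin q → ℕ)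
    (x : (Fin p → ℂ) × (Fin q → ℂ)) : (Fin p → ℂ) × (Fin q → ℂ) :=
  if x.1 ≠ 0 ∧ x.2 ≠ 0 then
    (((wnorm b x.2 / wnorm a x.1) ^ ((1 : ℝ) / 4)) • x.1,
     ((wnorm a x.1 / wnorm b x.2) ^ ((1 : ℝ) / 4)) • x.2)
  else (0, 0)

lemma wnorm_nonneg {n : ℕ} (c : Fin n → ℕ) (z : Fin n → ℂ) : 0 ≤ wnorm c z :=
  Finset.sum_nonneg fun _ _ => mul_nonneg (Nat.cast_nonneg _) (sq_nonneg _)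

lemma wnorm_zero {n : ℕ} (c : Fin n → ℕ) : wnorm c 0 = 0 := by
  simp [wnorm]

lemma wnorm_pos {n : ℕ} {c : Fin n → ℕ} (hc : ∀ j, 0 < c j) {z : Fin n → ℂ}
    (hz : z ≠ 0) : 0 < wnorm c z := by
  obtain ⟨j, hj⟩ := Function.ne_iff.mp hz
  refine Finset.sum_pos' (fun i _ => mul_nonneg (Nat.cast_nonneg _) (sq_nonneg _))
    ⟨j, Finset.mem_univ j, ?_⟩
  have hzj : z j ≠ 0 := hj
  have h1 : (0 : ℝ) < ‖z j‖ := norm_pos_iff.mpr hzj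
  have h2 : (0 : ℝ) < (c j : ℝ) := by exact_mod_cast hc j
  positivity

lemma norm_le_sqrt_wnorm {n : ℕ} {c : Fin n → ℕ} (hc : ∀ j, 0 < c j)
    (z : Fin n → ℂ) : ‖z‖ ≤ Real.sqrt (wnorm c z) := by
  rw [pi_norm_le_iff_of_nonneg (Real.sqrt_nonneg _)]
  intro i
  have h1 : ‖z i‖ ^ 2 ≤ wnorm c z := by
    have h2 : ‖z i‖ ^ 2 ≤ (c i : ℝ) * ‖z i‖ ^ 2 := by
      have : (1 : ℝ) ≤ (c i : ℝ) := by exact_mod_cast hc i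
      nlinarith [sq_nonneg ‖z i‖]
    have h3 : (c i : ℝ) * ‖z i‖ ^ 2 ≤ wnorm c z :=
      Finset.single_le_sum (f := fun j => (c j : ℝ) * ‖z j‖ ^ 2)
        (fun j _ => mul_nonneg (Nat.cast_nonneg _) (sq_nonneg _)) (Finset.mem_univ i)
    exact h2.trans h3
  calc ‖z i‖ = Real.sqrt (‖z i‖ ^ 2) := by rw [Real.sqrt_sq (norm_nonneg _)]
    _ ≤ Real.sqrt (wnorm c z) := Real.sqrt_le_sqrt h1

lemma contDiff_wnorm {n : ℕ} (c : Fin n → ℕ) : ContDiff ℝ (⊤ : ℕ∞) (wnorm c) := by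
  unfold wnorm
  exact ContDiff.sum fun j _ =>
    contDiff_const.mul ((contDiff_norm_sq ℝ).comp (contDiff_pi.mp contDiff_id j))

lemma rpow_mul_sqrt_eq {C D : ℝ} (hC : 0 < C) (hD : 0 ≤ D) :
    (D / C) ^ ((1 : ℝ) / 4) * Real.sqrt C = C ^ ((1 : ℝ) / 4) * D ^ ((1 : ℝ) / 4) := by
  have hsq : Real.sqrt C = C ^ ((1 : ℝ) / 4) * C ^ ((1 : ℝ) / 4) := by
    rw [← Real.rpow_add hC, Real.sqrt_eq_rpow]; norm_num
  have hC4 : C ^ ((1 : ℝ) / 4) ≠ 0 := (Real.rpow_pos_of_pos hC _).ne'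
  rw [Real.div_rpow hD hC.le, hsq]
  field_simp

lemma psi_norm_le {p q : ℕ} (a : Fin p → ℕ) (b : Fin q → ℕ)
    (ha : ∀ j, 0 < a j) (hb : ∀ j, 0 < b j) (x : (Fin p → ℂ) × (Fin q → ℂ)) :
    ‖psi a b x‖ ≤ (wnorm a x.1) ^ ((1 : ℝ) / 4) * (wnorm b x.2) ^ ((1 : ℝ) / 4) := by
  by_cases h : x.1 ≠ 0 ∧ x.2 ≠ 0
  · have hc : 0 < wnorm a x.1 := wnorm_pos ha h.1
    have hd : 0 < wnorm b x.2 := wnorm_pos hb h.2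
    rw [psi, if_pos h, Prod.norm_def]
    apply max_le
    · have h1 : ‖x.1‖ ≤ Real.sqrt (wnorm a x.1) := norm_le_sqrt_wnorm ha x.1
      calc ‖((wnorm b x.2 / wnorm a x.1) ^ ((1 : ℝ) / 4)) • x.1‖
          = (wnorm b x.2 / wnorm a x.1) ^ ((1 : ℝ) / 4) * ‖x.1‖ := by
            rw [norm_smul, Real.norm_eq_abs,
              abs_of_nonneg (Real.rpow_nonneg (div_nonneg hd.le hc.le) _)]
        _ ≤ (wnorm b x.2 / wnorm a x.1) ^ ((1 : ℝ) / 4) * Real.sqrt (wnorm a x.1) := by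
            gcongr
        _ = (wnorm a x.1) ^ ((1 : ℝ) / 4) * (wnorm b x.2) ^ ((1 : ℝ) / 4) :=
            rpow_mul_sqrt_eq hc hd.le
    · have h1 : ‖x.2‖ ≤ Real.sqrt (wnorm b x.2) := norm_le_sqrt_wnorm hb x.2
      calc ‖((wnorm a x.1 / wnorm b x.2) ^ ((1 : ℝ) / 4)) • x.2‖
          = (wnorm a x.1 / wnorm b x.2) ^ ((1 : ℝ) / 4) * ‖x.2‖ := by
            rw [norm_smul, Real.norm_eq_abs,
              abs_of_nonneg (Real.rpow_nonneg (div_nonneg hc.le hd.le) _)]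
        _ ≤ (wnorm a x.1 / wnorm b x.2) ^ ((1 : ℝ) / 4) * Real.sqrt (wnorm b x.2) := by
            gcongr
        _ = (wnorm b x.2) ^ ((1 : ℝ) / 4) * (wnorm a x.1) ^ ((1 : ℝ) / 4) :=
            rpow_mul_sqrt_eq hd hc.le
        _ = (wnorm a x.1) ^ ((1 : ℝ) / 4) * (wnorm b x.2) ^ ((1 : ℝ) / 4) := mul_comm _ _
  · rw [psi, if_neg h]
    have : ‖((0, 0) : (Fin p → ℂ) × (Fin q → ℂ))‖ = 0 := by simp [Prod.norm_def]
    rw [this]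
    exact mul_nonneg (Real.rpow_nonneg (wnorm_nonneg _ _) _)
      (Real.rpow_nonneg (wnorm_nonneg _ _) _)

/-- `ψ` is continuous on all of `ℂ^p × ℂ^q`, smooth on `{z ≠ 0 and w ≠ 0}`, and
equivariant for the weighted circle action. -/
theorem stmt_11 {p q : ℕ} (hp : 1 ≤ p) (hq : 1 ≤ q)
    (a : Fin p → ℕ) (b : Fin q → ℕ) (ha : ∀ j, 0 < a j) (hb : ∀ j, 0 < b j) :
    Continuous (psi a b) ∧
    ContDiffOn ℝ (⊤ : ℕ∞) (psi a b)
      {x : (Fin p → ℂ) × (Fin q → ℂ) | x.1 ≠ 0 ∧ x.2 ≠ 0} ∧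
    (∀ l : ℂ, ‖l‖ = 1 → ∀ x : (Fin p → ℂ) × (Fin q → ℂ),
      psi a b (act a b l x) = act a b l (psi a b x)) := by
  set S : Set ((Fin p → ℂ) × (Fin q → ℂ)) := {x | x.1 ≠ 0 ∧ x.2 ≠ 0} with hS
  have hopen : IsOpen S := by
    have h1 : IsOpen {x : (Fin p → ℂ) × (Fin q → ℂ) | x.1 ≠ 0} :=
      isOpen_compl_iff.mpr (isClosed_singleton.preimage continuous_fst)
    have h2 : IsOpen {x : (Fin p → ℂ) × (Fin q → ℂ) | x.2 ≠ 0} :=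
      isOpen_compl_iff.mpr (isClosed_singleton.preimage continuous_snd)
    exact h1.inter h2
  -- smoothness on S
  have hsmooth : ContDiffOn ℝ (⊤ : ℕ∞) (psi a b) S := by
    intro x hx
    apply ContDiffAt.contDiffWithinAt
    have hc : 0 < wnorm a x.1 := wnorm_pos ha hx.1
    have hd : 0 < wnorm b x.2 := wnorm_pos hb hx.2
    have hwa : ContDiffAt ℝ (⊤ : ℕ∞) (fun y : (Fin p → ℂ) × (Fin q → ℂ) => wnorm a y.1) x :=
      ((contDiff_wnorm a).comp contDiff_fst).contDiffAt
    have hwb : ContDiffAt ℝ (⊤ : ℕ∞) (fun y : (Fin p → ℂ) × (Fin q → ℂ) => wnorm b y.2) x :=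
      ((contDiff_wnorm b).comp contDiff_snd).contDiffAt
    have g1 : ContDiffAt ℝ (⊤ : ℕ∞)
        (fun y : (Fin p → ℂ) × (Fin q → ℂ) =>
          (wnorm b y.2 / wnorm a y.1) ^ ((1 : ℝ) / 4)) x :=
      by have := (Real.contDiffAt_rpow_const_of_ne (p := (1 : ℝ) / 4) (div_ne_zero hd.ne' hc.ne')).comp x
            (hwb.div hwa hc.ne'); exact this
    have g2 : ContDiffAt ℝ (⊤ : ℕ∞)
        (fun y : (Fin p → ℂ) × (Fin q → ℂ) =>
          (wnorm a y.1 / wnorm b y.2) ^ ((1 : ℝ) / 4)) x :=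
      by have := (Real.contDiffAt_rpow_const_of_ne (p := (1 : ℝ) / 4) (div_ne_zero hc.ne' hd.ne')).comp x
            (hwa.div hwb hd.ne'); exact this
    have hF : ContDiffAt ℝ (⊤ : ℕ∞) (fun y : (Fin p → ℂ) × (Fin q → ℂ) =>
        (((wnorm b y.2 / wnorm a y.1) ^ ((1 : ℝ) / 4)) • y.1,
         ((wnorm a y.1 / wnorm b y.2) ^ ((1 : ℝ) / 4)) • y.2)) x :=
      (g1.smul contDiffAt_fst).prodMk (g2.smul contDiffAt_snd)
    apply hF.congr_of_eventuallyEq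
    filter_upwards [hopen.mem_nhds hx] with y hy
    rw [psi, if_pos (show y.1 ≠ 0 ∧ y.2 ≠ 0 from hy)]
  -- continuity
  have hcont : Continuous (psi a b) := by
    rw [continuous_iff_continuousAt]
    intro x
    by_cases hx : x.1 ≠ 0 ∧ x.2 ≠ 0
    · exact (hsmooth.continuousOn x hx).continuousAt (hopen.mem_nhds hx)
    · have hx0 : psi a b x = 0 := by
        rw [psi, if_neg hx]; rfl
      rw [ContinuousAt, hx0]
      have hfcont : Continuous (fun y : (Fin p → ℂ) × (Fin q → ℂ) =>
          (wnorm a y.1) ^ ((1 : ℝ) / 4) * (wnorm b y.2) ^ ((1 : ℝ) / 4)) := by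
        apply Continuous.mul
        · exact (Real.continuous_rpow_const (by norm_num)).comp
            ((contDiff_wnorm a).continuous.comp continuous_fst)
        · exact (Real.continuous_rpow_const (by norm_num)).comp
            ((contDiff_wnorm b).continuous.comp continuous_snd)
      have hfx : (wnorm a x.1) ^ ((1 : ℝ) / 4) * (wnorm b x.2) ^ ((1 : ℝ) / 4) = 0 := by
        rcases not_and_or.mp hx with h | h
        · rw [not_not.mp h, wnorm_zero, Real.zero_rpow (by norm_num), zero_mul]
        · rw [not_not.mp h, wnorm_zero, Real.zero_rpow (by norm_num), mul_zero]
      have ht : Filter.Tendsto (fun y : (Fin p → ℂ) × (Fin q → ℂ) =>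
          (wnorm a y.1) ^ ((1 : ℝ) / 4) * (wnorm b y.2) ^ ((1 : ℝ) / 4)) (nhds x)
          (nhds ((wnorm a x.1) ^ ((1 : ℝ) / 4) * (wnorm b x.2) ^ ((1 : ℝ) / 4))) :=
        hfcont.continuousAt
      rw [hfx] at ht
      exact squeeze_zero_norm (psi_norm_le a b ha hb) ht
  refine ⟨hcont, hsmooth, ?_⟩
  -- equivariance
  intro l hl x
  have hl0 : l ≠ 0 := by
    intro h; rw [h] at hl; simp at hl
  have hz : ∀ m : ℤ, l ^ m ≠ 0 := fun m => zpow_ne_zero m hl0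
  have key1 : ((fun j => l ^ (a j : ℤ) * x.1 j) = (0 : Fin p → ℂ)) ↔ x.1 = 0 := by
    simp only [funext_iff, Pi.zero_apply, mul_eq_zero]
    constructor
    · intro h j; exact (h j).resolve_left (hz _)
    · intro h j; exact Or.inr (h j)
  have key2 : ((fun j => l ^ (-(b j : ℤ)) * x.2 j) = (0 : Fin q → ℂ)) ↔ x.2 = 0 := by
    simp only [funext_iff, Pi.zero_apply, mul_eq_zero]
    constructor
    · intro h j; exact (h j).resolve_left (hz _)
    · intro h j; exact Or.inr (h j)
  have hwa : wnorm a (fun j => l ^ (a j : ℤ) * x.1 j) = wnorm a x.1 := by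
    unfold wnorm
    refine Finset.sum_congr rfl fun j _ => ?_
    rw [norm_mul, norm_zpow, hl, one_zpow, one_mul]
  have hwb : wnorm b (fun j => l ^ (-(b j : ℤ)) * x.2 j) = wnorm b x.2 := by
    unfold wnorm
    refine Finset.sum_congr rfl fun j _ => ?_
    rw [norm_mul, norm_zpow, hl, one_zpow, one_mul]
  by_cases h : x.1 ≠ 0 ∧ x.2 ≠ 0
  · have h1' : (fun j => l ^ (a j : ℤ) * x.1 j) ≠ (0 : Fin p → ℂ) :=
      fun hc => h.1 (key1.mp hc)
    have h2' : (fun j => l ^ (-(b j : ℤ)) * x.2 j) ≠ (0 : Fin q → ℂ) :=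
      fun hc => h.2 (key2.mp hc)
    rw [psi, psi, if_pos (show (act a b l x).1 ≠ 0 ∧ (act a b l x).2 ≠ 0 from ⟨h1', h2'⟩),
      if_pos h]
    simp only [act]
    rw [Prod.mk.injEq]
    constructor
    · funext j
      simp only [Pi.smul_apply, hwa, hwb, Complex.real_smul]
      ring
    · funext j
      simp only [Pi.smul_apply, hwa, hwb, Complex.real_smul]
      ring
  · have h' : ¬((fun j => l ^ (a j : ℤ) * x.1 j) ≠ (0 : Fin p → ℂ) ∧
        (fun j => l ^ (-(b j : ℤ)) * x.2 j) ≠ (0 : Fin q → ℂ)) := by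
      intro hc
      exact h ⟨fun hz1 => hc.1 (key1.mpr hz1), fun hz2 => hc.2 (key2.mpr hz2)⟩
    rw [psi, psi, if_neg (show ¬((act a b l x).1 ≠ 0 ∧ (act a b l x).2 ≠ 0) from h'),
      if_neg h]
    simp only [act]
    refine Prod.ext ?_ ?_ <;> funext j <;> simp
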